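/- arXiv:1910.00585 — 4 statements merged into one kernel-verified Lean document; each statement's English description precedes it below -/
import Mathlib

section
/- Let P be a probability measure on a measurable space Ω and let κ ∈ (0,∞). Define H_κ : [0,1] → [0,∞] by H_κ(0) = ∞, H_κ(v) = κ(1+κ)^κ · v^{−1} · (−ln v)^{−1−κ} for v ∈ (0, e^{−1−κ}], and H_κ(v) = 0 for v ∈ (e^{−1−κ}, 1]. If f is a p-function w.r.t. P, then H_κ ∘ f is an e-function w.r.t. P, i.e. ∫ H_κ(f) dP ≤ 1. -/
/-!
The hypothesis on `f` says that `f` is stochastically larger than a uniform random variable `U`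
on `[0,1]`. As `H_κ` is antitone on `[0,1]`, the layer-cake formula turns this into
`E[H_κ(f)] ≤ E[H_κ(U)] = ∫₀¹ H_κ`. That integral is exactly `1`: on `(0, e^{-1-κ}]` the function
`(1+κ)^κ (-ln v)^{-κ}` is an antiderivative of `H_κ`, which tends to `0` at `0` and equals `1`
at `e^{-1-κ}`.
-/

open MeasureTheory
open scoped ENNReal

/-- The function `H_κ : [0,1] → [0,∞]`:
`H_κ(0) = ∞`, `H_κ(v) = κ(1+κ)^κ · v⁻¹ · (−ln v)^{−1−κ}` for `v ∈ (0, e^{−1−κ}]`,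
and `H_κ(v) = 0` for `v ∈ (e^{−1−κ}, 1]`. -/
noncomputable def Hfun (κ : ℝ) (v : ℝ) : ℝ≥0∞ :=
  if v = 0 then ⊤
  else if v ≤ Real.exp (-(1 + κ)) then
    ENNReal.ofReal (κ * (1 + κ) ^ κ * v⁻¹ * (-Real.log v) ^ (-(1 + κ)))
  else 0

open Set Real

lemma volume_restrict_Ioi_zero_setOf_ofReal_lt (x : ℝ≥0∞) :
    volume.restrict (Ioi 0) {t : ℝ | ENNReal.ofReal t < x} = x := by
  rw [Measure.restrict_apply' measurableSet_Ioi]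
  rcases eq_or_ne x ⊤ with rfl | hx
  · simp
  · have : {t : ℝ | ENNReal.ofReal t < x} ∩ Ioi 0 = Ioo 0 x.toReal := by
      ext t
      simp only [mem_inter_iff, mem_ofPred_eq, mem_Ioi, mem_Ioo]
      constructor
      · rintro ⟨h, ht⟩
        exact ⟨ht, (ENNReal.ofReal_lt_iff_lt_toReal ht.le hx).1 h⟩
      · rintro ⟨ht, h⟩
        exact ⟨(ENNReal.ofReal_lt_iff_lt_toReal ht.le hx).2 h, ht⟩
    rw [this, Real.volume_Ioo, sub_zero, ENNReal.ofReal_toReal hx]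

theorem lintegral_eq_lintegral_meas_ofReal_lt {α : Type*} [MeasurableSpace α] (μ : Measure α)
    [SFinite μ] {h : α → ℝ≥0∞} (hh : Measurable h) :
    ∫⁻ a, h a ∂μ = ∫⁻ t in Ioi 0, μ {a | ENNReal.ofReal t < h a} := by
  set E : Set (α × ℝ) := {q | ENNReal.ofReal q.2 < h q.1}
  have hE : MeasurableSet E :=
    measurableSet_lt (ENNReal.measurable_ofReal.comp measurable_snd) (hh.comp measurable_fst)
  calc ∫⁻ a, h a ∂μ
      = ∫⁻ a, (∫⁻ t in Ioi 0, E.indicator 1 (a, t)) ∂μ := by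
        congr with a
        rw [← volume_restrict_Ioi_zero_setOf_ofReal_lt (h a), ← lintegral_indicator_one]
        · rfl
        · exact measurableSet_lt ENNReal.measurable_ofReal measurable_const
    _ = ∫⁻ t in Ioi 0, ∫⁻ a, E.indicator 1 (a, t) ∂μ :=
        lintegral_lintegral_swap (measurable_one.indicator hE).aemeasurable
    _ = ∫⁻ t in Ioi 0, μ {a | ENNReal.ofReal t < h a} := by
        congr with t
        rw [← lintegral_indicator_one]
        · rfl
        · exact measurableSet_lt measurable_const hh

section PFunction

variable {Ω : Type*} [MeasurableSpace Ω] {P : Measure Ω} {f : Ω → ℝ}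

lemma measure_le_le_ofReal_of_nonneg (hfp : ∀ ε : ℝ, 0 < ε → P {ω | f ω ≤ ε} ≤ ENNReal.ofReal ε)
    {a : ℝ} (ha : 0 ≤ a) : P {ω | f ω ≤ a} ≤ ENNReal.ofReal a := by
  refine ENNReal.le_of_forall_pos_le_add fun ε hε _ => ?_
  calc P {ω | f ω ≤ a} ≤ P {ω | f ω ≤ a + ε} :=
        measure_mono fun ω (hω : f ω ≤ a) => show f ω ≤ a + ε by linarith [ε.coe_nonneg]
    _ ≤ ENNReal.ofReal (a + ε) := hfp _ (by positivity)
    _ = ENNReal.ofReal a + ε := by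
        rw [ENNReal.ofReal_add ha ε.coe_nonneg, ENNReal.ofReal_coe_nnreal]

lemma measure_preimage_le_volume_of_forall_Icc_subset (hf01 : ∀ ω, f ω ∈ Icc (0 : ℝ) 1)
    (hfp : ∀ ε : ℝ, 0 < ε → P {ω | f ω ≤ ε} ≤ ENNReal.ofReal ε) {S : Set ℝ}
    (hS : ∀ u ∈ S ∩ Icc 0 1, Icc 0 u ⊆ S) : P (f ⁻¹' S) ≤ volume (S ∩ Icc 0 1) := by
  set T := S ∩ Icc 0 1
  have hpre : f ⁻¹' S = f ⁻¹' T := by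
    ext ω; simp [T, hf01 ω]
  rcases T.eq_empty_or_nonempty with hT | ⟨u₀, hu₀⟩
  · simp [hpre, hT]
  have hbdd : BddAbove T := ⟨1, fun u hu => hu.2.2⟩
  set a := sSup T
  have ha : 0 ≤ a := hu₀.2.1.trans (le_csSup hbdd hu₀)
  calc P (f ⁻¹' S) ≤ P {ω | f ω ≤ a} := by
        rw [hpre]; exact measure_mono fun ω hω => le_csSup hbdd hω
    _ ≤ ENNReal.ofReal a := measure_le_le_ofReal_of_nonneg hfp ha
    _ = volume (Ico 0 a) := by rw [Real.volume_Ico, sub_zero]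
    _ ≤ volume T := by
        refine measure_mono fun v hv => ?_
        obtain ⟨u, hu, hvu⟩ := exists_lt_of_lt_csSup ⟨u₀, hu₀⟩ hv.2
        exact ⟨hS u hu ⟨hv.1, hvu.le⟩, hv.1, hvu.le.trans hu.2.2⟩

theorem lintegral_comp_le_setLIntegral_Icc_of_antitoneOn [SFinite P] (hf : Measurable f)
    (hf01 : ∀ ω, f ω ∈ Icc (0 : ℝ) 1)
    (hfp : ∀ ε : ℝ, 0 < ε → P {ω | f ω ≤ ε} ≤ ENNReal.ofReal ε) {g : ℝ → ℝ≥0∞}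
    (hg : Measurable g) (hanti : AntitoneOn g (Icc 0 1)) :
    ∫⁻ ω, g (f ω) ∂P ≤ ∫⁻ v in Icc 0 1, g v := by
  rw [lintegral_eq_lintegral_meas_ofReal_lt P (h := fun ω => g (f ω)) (hg.comp hf),
    lintegral_eq_lintegral_meas_ofReal_lt _ hg]
  refine lintegral_mono fun t => ?_
  rw [Measure.restrict_apply' measurableSet_Icc]
  exact measure_preimage_le_volume_of_forall_Icc_subset hf01 hfp fun u hu v hv =>
    hu.1.trans_le (hanti ⟨hv.1, hv.2.trans hu.2.2⟩ hu.2 hv.2)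

end PFunction

lemma monotoneOn_exp_mul_rpow_neg {p : ℝ} (hp : 0 < p) :
    MonotoneOn (fun x => exp x * x ^ (-p)) (Ici p) := by
  intro x (hx : p ≤ x) y _ hxy
  have hx0 : 0 < x := hp.trans_le hx
  have hy0 : 0 < y := hx0.trans_le hxy
  have hlog : log y - log x ≤ (y - x) / x := by
    rw [← log_div hy0.ne' hx0.ne', sub_div, div_self hx0.ne']
    exact log_le_sub_one_of_pos (div_pos hy0 hx0)
  have hdiv : p * ((y - x) / x) ≤ y - x := by
    rw [mul_div_assoc', div_le_iff₀ hx0]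
    nlinarith
  show exp x * x ^ (-p) ≤ exp y * y ^ (-p)
  rw [rpow_def_of_pos hx0, rpow_def_of_pos hy0, ← exp_add, ← exp_add, exp_le_exp]
  nlinarith

section Calibrator

variable {κ : ℝ}

lemma le_neg_log_of_le_exp {v : ℝ} (hv : 0 < v) (hvt : v ≤ exp (-(1 + κ))) :
    1 + κ ≤ -log v := by
  rw [le_neg, log_le_iff_le_exp hv]; exact hvt

lemma Hfun_of_le {v : ℝ} (hv : 0 < v) (hvt : v ≤ exp (-(1 + κ))) :
    Hfun κ v = ENNReal.ofReal (κ * (1 + κ) ^ κ * v⁻¹ * (-log v) ^ (-(1 + κ))) := by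
  rw [Hfun, if_neg hv.ne', if_pos hvt]

lemma Hfun_of_lt {v : ℝ} (hvt : exp (-(1 + κ)) < v) : Hfun κ v = 0 := by
  rw [Hfun, if_neg ((exp_pos _).trans hvt).ne', if_neg hvt.not_ge]

lemma antitoneOn_Hfun (hκ : 0 < κ) : AntitoneOn (Hfun κ) (Ici 0) := by
  intro u (hu : 0 ≤ u) v _ huv
  rcases hu.eq_or_lt with rfl | hu0
  · simp [Hfun]
  by_cases hvt : v ≤ exp (-(1 + κ))
  · have hv0 := hu0.trans_le huv
    -- with `x = -log v`, `H_κ v = κ (1+κ)^κ · exp x · x ^ (-(1+κ))`, increasing in `x ≥ 1 + κ`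
    have hinv : ∀ w, 0 < w → w⁻¹ = exp (-log w) := fun w hw => by rw [exp_neg, exp_log hw]
    rw [Hfun_of_le hv0 hvt, Hfun_of_le hu0 (huv.trans hvt), hinv u hu0, hinv v hv0,
      mul_assoc _ (exp _), mul_assoc _ (exp _)]
    refine ENNReal.ofReal_le_ofReal (mul_le_mul_of_nonneg_left ?_ (by positivity))
    exact monotoneOn_exp_mul_rpow_neg (by linarith) (le_neg_log_of_le_exp hv0 hvt)
      (le_neg_log_of_le_exp hu0 (huv.trans hvt)) (neg_le_neg (log_le_log hu0 huv))
  · rw [Hfun_of_lt (not_le.1 hvt)]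
    exact zero_le

lemma measurable_Hfun : Measurable (Hfun κ) := by
  refine Measurable.ite (measurableSet_singleton 0) measurable_const
    (Measurable.ite measurableSet_Iic ?_ measurable_const)
  fun_prop

lemma hasDerivAt_rpow_neg_log {v : ℝ} (hv0 : 0 < v) (hv1 : v < 1) :
    HasDerivAt (fun w => (1 + κ) ^ κ * (-log w) ^ (-κ))
      (κ * (1 + κ) ^ κ * v⁻¹ * (-log v) ^ (-(1 + κ))) v := by
  have hL : -log v ≠ 0 := by linarith [log_neg hv0 hv1]
  refine ((((hasDerivAt_log hv0.ne').neg).rpow_const (p := -κ) (Or.inl hL)).const_mul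
    ((1 + κ) ^ κ)).congr_deriv ?_
  rw [show -κ - 1 = -(1 + κ) by ring, Pi.neg_apply]
  ring

lemma continuousOn_rpow_neg_log (hκ : 0 < κ) {b : ℝ} (hb : b < 1) :
    ContinuousOn (fun w => (1 + κ) ^ κ * (-log w) ^ (-κ)) (Icc 0 b) := by
  intro v hv
  rcases hv.1.eq_or_lt with rfl | hv0
  -- the junk values `log 0 = 0` and `0 ^ (-κ) = 0` make the value at `0` the right-hand limit
  · refine (continuousWithinAt_Ioi_iff_Ici.1 ?_).mono Icc_subset_Ici_self
    have hlim := ((tendsto_rpow_neg_atTop hκ).comp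
      (Filter.tendsto_neg_atBot_atTop.comp tendsto_log_nhdsGT_zero)).const_mul ((1 + κ) ^ κ)
    simpa [ContinuousWithinAt, zero_rpow (neg_ne_zero.2 hκ.ne')] using hlim
  · exact (hasDerivAt_rpow_neg_log hv0 (hv.2.trans_lt hb)).continuousAt.continuousWithinAt

theorem setLIntegral_Icc_Hfun (hκ : 0 < κ) : ∫⁻ v in Icc 0 1, Hfun κ v = 1 := by
  set t := exp (-(1 + κ))
  set h : ℝ → ℝ := fun v => κ * (1 + κ) ^ κ * v⁻¹ * (-log v) ^ (-(1 + κ))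
  have ht0 : 0 < t := exp_pos _
  have ht1 : t < 1 := exp_lt_one_iff.2 (by linarith)
  have hderiv : ∀ v ∈ Ioo 0 t, HasDerivAt (fun w => (1 + κ) ^ κ * (-log w) ^ (-κ)) (h v) v :=
    fun v hv => hasDerivAt_rpow_neg_log hv.1 (hv.2.trans ht1)
  have hcont := continuousOn_rpow_neg_log hκ ht1
  have hnonneg : ∀ v ∈ Ioc 0 t, 0 ≤ h v := fun v hv =>
    mul_nonneg (by have := hv.1; positivity)
      (rpow_nonneg (by linarith [le_neg_log_of_le_exp hv.1 hv.2]) _)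
  have hint : IntegrableOn h (Ioc 0 t) :=
    intervalIntegral.integrableOn_deriv_of_nonneg hcont hderiv fun v hv =>
      hnonneg v (Ioo_subset_Ioc_self hv)
  have hFTC : ∫ v in Ioc 0 t, h v = 1 := by
    rw [← intervalIntegral.integral_of_le ht0.le,
      intervalIntegral.integral_eq_sub_of_hasDerivAt_of_le ht0.le hcont hderiv
        ((intervalIntegrable_iff_integrableOn_Ioc_of_le ht0.le).2 hint)]
    have h1κ : (0 : ℝ) < 1 + κ := by linarith
    simp only [t, log_exp, neg_neg, log_zero, neg_zero, zero_rpow (neg_ne_zero.2 hκ.ne'), mul_zero,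
      sub_zero, ← rpow_add h1κ, add_neg_cancel, rpow_zero]
  calc ∫⁻ v in Icc 0 1, Hfun κ v
      = ∫⁻ v in Ioc 0 1, (Ioc 0 t).indicator (fun v => ENNReal.ofReal (h v)) v := by
        rw [setLIntegral_congr Ioc_ae_eq_Icc.symm]
        refine setLIntegral_congr_fun measurableSet_Ioc fun v hv => ?_
        by_cases hvt : v ≤ t
        · rw [indicator_of_mem (show v ∈ Ioc 0 t from ⟨hv.1, hvt⟩), Hfun_of_le hv.1 hvt]
        · rw [indicator_of_notMem fun hv' => hvt hv'.2, Hfun_of_lt (not_le.1 hvt)]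
    _ = ∫⁻ v in Ioc 0 t, ENNReal.ofReal (h v) := by
        rw [lintegral_indicator measurableSet_Ioc, Measure.restrict_restrict measurableSet_Ioc,
          inter_eq_left.2 (Ioc_subset_Ioc_right ht1.le)]
    _ = 1 := by
        rw [← ofReal_integral_eq_lintegral_ofReal hint
          ((ae_restrict_iff' measurableSet_Ioc).2 (Filter.Eventually.of_forall hnonneg)), hFTC,
          ENNReal.ofReal_one]

end Calibrator

/-- if `f` is a p-function w.r.t. the probability measure `P`
and `κ ∈ (0,∞)`, then `H_κ ∘ f` is an e-function w.r.t. `P`. -/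
theorem stmt1 {Ω : Type*} [MeasurableSpace Ω] (P : Measure Ω) [IsProbabilityMeasure P]
    (κ : ℝ) (hκ : 0 < κ)
    (f : Ω → ℝ) (hf : Measurable f) (hf01 : ∀ ω, f ω ∈ Set.Icc (0 : ℝ) 1)
    (hfp : ∀ ε : ℝ, 0 < ε → P {ω | f ω ≤ ε} ≤ ENNReal.ofReal ε) :
    ∫⁻ ω, Hfun κ (f ω) ∂P ≤ 1 := by
  calc ∫⁻ ω, Hfun κ (f ω) ∂P ≤ ∫⁻ v in Icc 0 1, Hfun κ v :=
        lintegral_comp_le_setLIntegral_Icc_of_antitoneOn hf hf01 hfp measurable_Hfun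
          ((antitoneOn_Hfun hκ).mono Icc_subset_Ici_self)
    _ = 1 := setLIntegral_Icc_Hfun hκ
end

section
/- Let (P_θ)_{θ∈Θ} be a statistical model on a sample space Ω and let κ ∈ (0,1). (a) If f : Ω × Θ → [0,1] is a conditional p-function w.r.t. the model, then (ω,θ) ↦ κ·f(ω;θ)^{κ−1} (with 0^{κ−1} = ∞) is a conditional e-function w.r.t. the model, i.e. ∫ κ·f(ω;θ)^{κ−1} P_θ(dω) ≤ 1 for every θ ∈ Θ. (b) If f : Ω × Θ → [0,∞] is a conditional e-function w.r.t. the model, then (ω,θ) ↦ min(1, 1/f(ω;θ)) is a conditional p-function w.r.t. the model, i.e. P_θ{ω : min(1, 1/f(ω;θ)) ≤ ε} ≤ ε for every θ ∈ Θ and every ε > 0. -/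
/-!
For `0 < x ≤ 1` one has `κ x^(κ-1) = κ + κ(1-κ) ∫_x^1 t^(κ-2) dt`, while for `x > 1` the
left side is below `κ`. Integrating against `P_θ` and exchanging the integrals bounds the
integral of `κ f^(κ-1)` by `κ + κ(1-κ) ∫_0^1 t^(κ-2) P_θ{f < t} dt`, and the p-property
`P_θ{f < t} ≤ t` makes this at most `κ + κ(1-κ) ∫_0^1 t^(κ-1) dt = 1`.
The p-property also forces `f > 0` almost surely, which disposes of the value `0^(κ-1) = ∞`.
Part (b) is Markov's inequality: for `ε < 1`, `min 1 f⁻¹ ≤ ε` means `ε⁻¹ ≤ f`.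
-/

open MeasureTheory ProbabilityTheory Set
open scoped ENNReal

lemma lintegral_Ioc_rpow {a b r : ℝ} (ha : 0 ≤ a) (hab : a ≤ b)
    (hr : -1 < r ∨ r ≠ -1 ∧ (0 : ℝ) ∉ uIcc a b) :
    ∫⁻ t in Ioc a b, ENNReal.ofReal (t ^ r) =
      ENNReal.ofReal ((b ^ (r + 1) - a ^ (r + 1)) / (r + 1)) := by
  have hint : IntervalIntegrable (fun t : ℝ => t ^ r) volume a b := by
    rcases hr with hr | hr
    · exact intervalIntegral.intervalIntegrable_rpow' hr
    · exact intervalIntegral.intervalIntegrable_rpow (Or.inr hr.2)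
  rw [intervalIntegrable_iff_integrableOn_Ioc_of_le hab] at hint
  rw [← integral_rpow hr, intervalIntegral.integral_of_le hab,
    ofReal_integral_eq_lintegral_ofReal hint]
  filter_upwards [ae_restrict_mem measurableSet_Ioc] with t ht
  exact Real.rpow_nonneg (ha.trans ht.1.le) r

lemma ofReal_mul_rpow_sub_one_eq {κ y : ℝ} (hκ : κ ∈ Ioo 0 1) (hy : 0 < y) (hy1 : y ≤ 1) :
    ENNReal.ofReal (κ * y ^ (κ - 1)) = ENNReal.ofReal κ +
      ENNReal.ofReal (κ * (1 - κ)) * ∫⁻ t in Ioc y 1, ENNReal.ofReal (t ^ (κ - 2)) := by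
  obtain ⟨hκ0, hκ1⟩ := hκ
  have hy0 : (0 : ℝ) ∉ uIcc y 1 := fun h => by
    rcases mem_uIcc.mp h with h | h <;> linarith [h.1]
  have hone_le : 1 ≤ y ^ (κ - 1) :=
    Real.one_le_rpow_of_pos_of_le_one_of_nonpos hy hy1 (by linarith)
  have hexp : κ - 2 + 1 = κ - 1 := by ring
  rw [lintegral_Ioc_rpow hy.le hy1 (Or.inr ⟨by linarith, hy0⟩), hexp, Real.one_rpow,
    ← ENNReal.ofReal_mul (by nlinarith), ← ENNReal.ofReal_add hκ0.le]
  · have hκ' : κ - 1 ≠ 0 := by linarith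
    congr 1
    field_simp
    ring
  · exact mul_nonneg (by nlinarith) (div_nonneg_of_nonpos (by linarith) (by linarith))

lemma ofReal_mul_rpow_sub_one_le {κ : ℝ} (hκ : κ ∈ Ioo 0 1) {x : ℝ≥0∞} (hx : 0 < x) :
    ENNReal.ofReal κ * x ^ (κ - 1) ≤ ENNReal.ofReal κ + ENNReal.ofReal (κ * (1 - κ)) *
      ∫⁻ t in Ioc 0 1,
        {t | x < ENNReal.ofReal t}.indicator (fun t => ENNReal.ofReal (t ^ (κ - 2))) t := by
  rcases le_or_gt x 1 with hx1 | hx1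
  · have hxt : x ≠ ∞ := (hx1.trans_lt ENNReal.one_lt_top).ne
    obtain ⟨y, hy, rfl⟩ : ∃ y : ℝ, 0 < y ∧ ENNReal.ofReal y = x :=
      ⟨x.toReal, ENNReal.toReal_pos hx.ne' hxt, ENNReal.ofReal_toReal hxt⟩
    have hy1 : y ≤ 1 := by simpa using hx1
    have hset : {t | ENNReal.ofReal y < ENNReal.ofReal t} ∩ Ioc 0 1 = Ioc y 1 := by
      ext t
      simp only [mem_inter_iff, mem_ofPred_eq, mem_Ioc, ENNReal.ofReal_lt_ofReal_iff']
      constructor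
      · rintro ⟨⟨hyt, -⟩, -, ht1⟩
        exact ⟨hyt, ht1⟩
      · rintro ⟨hyt, ht1⟩
        exact ⟨⟨hyt, hy.trans hyt⟩, hy.trans hyt, ht1⟩
    rw [lintegral_indicator (measurableSet_lt measurable_const ENNReal.measurable_ofReal),
      Measure.restrict_restrict (measurableSet_lt measurable_const ENNReal.measurable_ofReal), hset,
      ENNReal.ofReal_rpow_of_pos hy, ← ENNReal.ofReal_mul hκ.1.le]
    exact (ofReal_mul_rpow_sub_one_eq hκ hy hy1).le
  · calc ENNReal.ofReal κ * x ^ (κ - 1) ≤ ENNReal.ofReal κ * 1 := by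
          gcongr
          exact ENNReal.rpow_le_one_of_one_le_of_neg hx1.le (by linarith [hκ.2])
      _ ≤ _ := by rw [mul_one]; exact le_self_add

section

variable {Ω : Type*} [MeasurableSpace Ω] {μ : Measure Ω} {F : Ω → ℝ≥0∞}

lemma lintegral_setLIntegral_indicator_lt_ofReal [SFinite μ] (hF : Measurable F)
    {g : ℝ → ℝ≥0∞} (hg : Measurable g) (s : Set ℝ) :
    ∫⁻ ω, (∫⁻ t in s, {t | F ω < ENNReal.ofReal t}.indicator g t) ∂μ =
      ∫⁻ t in s, μ {ω | F ω < ENNReal.ofReal t} * g t := by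
  have hmeas : Measurable fun p : Ω × ℝ => {t | F p.1 < ENNReal.ofReal t}.indicator g p.2 :=
    (hg.comp measurable_snd).indicator
      (measurableSet_lt (hF.comp measurable_fst) (ENNReal.measurable_ofReal.comp measurable_snd))
  rw [lintegral_lintegral_swap hmeas.aemeasurable]
  congr 1
  funext t
  rw [mul_comm, ← lintegral_indicator_const (measurableSet_lt hF measurable_const)]
  rfl

lemma ae_pos_of_forall_measure_le_le (hp : ∀ ε, 0 < ε → μ {ω | F ω ≤ ε} ≤ ε) :
    ∀ᵐ ω ∂μ, 0 < F ω := by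
  refine ae_iff.mpr (le_antisymm (ENNReal.le_of_forall_pos_le_add fun ε hε _ => ?_) zero_le)
  calc μ {ω | ¬0 < F ω} ≤ μ {ω | F ω ≤ ε} :=
        measure_mono fun ω hω => (not_lt.mp hω).trans zero_le
    _ ≤ 0 + ε := by rw [zero_add]; exact hp ε (ENNReal.coe_pos.mpr hε)

theorem lintegral_ofReal_mul_rpow_sub_one_le_one [IsProbabilityMeasure μ] {κ : ℝ}
    (hκ : κ ∈ Ioo 0 1) (hF : Measurable F) (hp : ∀ ε, 0 < ε → μ {ω | F ω ≤ ε} ≤ ε) :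
    ∫⁻ ω, ENNReal.ofReal κ * F ω ^ (κ - 1) ∂μ ≤ 1 := by
  obtain ⟨hκ0, hκ1⟩ := hκ
  set g : ℝ → ℝ≥0∞ := fun t => ENNReal.ofReal (t ^ (κ - 2))
  have hg : Measurable g := (measurable_id.pow_const _).ennreal_ofReal
  have hbound : ∀ t ∈ Ioc (0 : ℝ) 1,
      μ {ω | F ω < ENNReal.ofReal t} * g t ≤ ENNReal.ofReal (t ^ (κ - 1)) := fun t ht => by
    calc μ {ω | F ω < ENNReal.ofReal t} * g t ≤ ENNReal.ofReal t * g t := by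
          gcongr
          exact (measure_mono (ofPred_subset_ofPred.mpr fun _ => le_of_lt)).trans
            (hp _ (ENNReal.ofReal_pos.mpr ht.1))
      _ = ENNReal.ofReal (t ^ (κ - 1)) := by
          rw [← ENNReal.ofReal_mul ht.1.le, ← Real.rpow_one_add' ht.1.le (by linarith)]
          ring_nf
  have hintegral : ∫⁻ t in Ioc 0 1, ENNReal.ofReal (t ^ (κ - 1)) = ENNReal.ofReal κ⁻¹ := by
    rw [lintegral_Ioc_rpow le_rfl zero_le_one (Or.inl (by linarith)), sub_add_cancel,
      Real.one_rpow, Real.zero_rpow hκ0.ne', sub_zero, one_div]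
  have hc : 0 ≤ κ * (1 - κ) := mul_nonneg hκ0.le (by linarith)
  calc ∫⁻ ω, ENNReal.ofReal κ * F ω ^ (κ - 1) ∂μ
      ≤ ∫⁻ ω, (ENNReal.ofReal κ + ENNReal.ofReal (κ * (1 - κ)) *
          ∫⁻ t in Ioc 0 1, {t | F ω < ENNReal.ofReal t}.indicator g t) ∂μ :=
        lintegral_mono_ae <| (ae_pos_of_forall_measure_le_le hp).mono fun ω hω =>
          ofReal_mul_rpow_sub_one_le ⟨hκ0, hκ1⟩ hω
    _ = ENNReal.ofReal κ + ENNReal.ofReal (κ * (1 - κ)) *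
          ∫⁻ t in Ioc 0 1, μ {ω | F ω < ENNReal.ofReal t} * g t := by
        rw [lintegral_add_left measurable_const, lintegral_const, measure_univ, mul_one,
          lintegral_const_mul' _ _ ENNReal.ofReal_ne_top,
          lintegral_setLIntegral_indicator_lt_ofReal hF hg]
    _ ≤ ENNReal.ofReal κ + ENNReal.ofReal (κ * (1 - κ)) * ENNReal.ofReal κ⁻¹ := by
        rw [← hintegral]
        gcongr ENNReal.ofReal κ + ENNReal.ofReal (κ * (1 - κ)) * ?_
        exact setLIntegral_mono (measurable_id.pow_const _).ennreal_ofReal hbound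
    _ = 1 := by
        rw [← ENNReal.ofReal_mul hc, ← ENNReal.ofReal_add hκ0.le (by positivity),
          ← ENNReal.ofReal_one]
        congr 1
        field_simp
        ring

theorem measure_min_one_inv_le [IsProbabilityMeasure μ] (hF : AEMeasurable F μ)
    (he : ∫⁻ ω, F ω ∂μ ≤ 1) {ε : ℝ≥0∞} (hε : 0 < ε) : μ {ω | min 1 (F ω)⁻¹ ≤ ε} ≤ ε := by
  rcases le_or_gt 1 ε with hε1 | hε1
  · exact prob_le_one.trans hε1
  calc μ {ω | min 1 (F ω)⁻¹ ≤ ε} ≤ μ {ω | ε⁻¹ ≤ F ω} := measure_mono fun ω hω =>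
        ENNReal.inv_le_iff_inv_le.mp ((min_le_iff.mp hω).resolve_left hε1.not_ge)
    _ ≤ (∫⁻ ω, F ω ∂μ) / ε⁻¹ :=
        meas_ge_le_lintegral_div hF (ENNReal.inv_ne_zero.mpr hε1.ne_top)
          (ENNReal.inv_ne_top.mpr hε.ne')
    _ ≤ ε := by
        rw [div_eq_mul_inv, inv_inv]
        exact mul_le_of_le_one_left zero_le he

end

/-- relation between conditional p-functions and conditional
e-functions w.r.t. a statistical model `(P_θ)_{θ∈Θ}` and `κ ∈ (0,1)`.
(a) If `f : Ω × Θ → [0,1]` is a conditional p-function, then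
`(ω,θ) ↦ κ · f(ω;θ)^(κ-1)` is a conditional e-function (in `ℝ≥0∞`, `0 ^ (κ-1) = ∞`).
(b) If `f : Ω × Θ → [0,∞]` is a conditional e-function, then
`(ω,θ) ↦ min 1 (1/f(ω;θ))` is a conditional p-function. -/
theorem stmt4 {Ω Θ : Type*} [MeasurableSpace Ω] [MeasurableSpace Θ]
    (P : Kernel Θ Ω) [IsMarkovKernel P]
    (κ : ℝ) (hκ : κ ∈ Set.Ioo (0 : ℝ) 1) :
    (∀ f : Ω × Θ → ℝ≥0∞, Measurable f → (∀ x, f x ≤ 1) →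
      (∀ θ, ∀ ε : ℝ≥0∞, 0 < ε → P θ {ω | f (ω, θ) ≤ ε} ≤ ε) →
      ∀ θ, ∫⁻ ω, ENNReal.ofReal κ * f (ω, θ) ^ (κ - 1) ∂(P θ) ≤ 1) ∧
    (∀ f : Ω × Θ → ℝ≥0∞, Measurable f → (∀ θ, ∫⁻ ω, f (ω, θ) ∂(P θ) ≤ 1) →
      ∀ θ, ∀ ε : ℝ≥0∞, 0 < ε → P θ {ω | min 1 (f (ω, θ))⁻¹ ≤ ε} ≤ ε) :=
  ⟨fun _ hf _ hp θ =>
    lintegral_ofReal_mul_rpow_sub_one_le_one hκ (hf.comp measurable_prodMk_right) (hp θ),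
   fun _ hf he θ _ hε =>
    measure_min_one_inv_le (hf.comp measurable_prodMk_right).aemeasurable (he θ) hε⟩
end

section
/- Let (P_θ)_{θ∈Θ} be a statistical model on Ω and (Q_π)_{π∈Π} a statistical model on Θ (a para-Bayesian model), and for each π ∈ Π let T_π be the probability measure on Ω × Θ with T_π(A×B) = ∫_B P_θ(A) Q_π(dθ). If f : Ω × Θ → [0,∞] is measurable and ∫ f dT_π ≤ 1 for every π ∈ Π, then there exist a conditional e-function g w.r.t. (P_θ) and an e-function h w.r.t. (Q_π) such that for every π ∈ Π, f(ω,θ) = g(ω;θ)·h(θ) holds T_π-almost everywhere. Moreover one can take h(θ) = ∫ f(ω,θ) P_θ(dω) and g(ω;θ) = f(ω,θ)/h(θ) (with 0/0 := 0). -/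
/-!
Disintegrating `T_π` along `θ` gives `∫ f dT_π = ∫ h dQ_π` with `h(θ) = ∫ f(·,θ) dP_θ`, so `h` is
an e-function for `Q`. For each `θ`, `f(·,θ) / h(θ)` integrates to `h(θ) · h(θ)⁻¹ ≤ 1` against `P_θ`,
and multiplying back by `h(θ)` recovers `f(·,θ)` `P_θ`-a.e. as soon as `h(θ) < ∞` (when `h(θ) = 0`,
`f(·,θ)` vanishes a.e.); finiteness holds `Q_π`-a.e. because `h` has finite `Q_π`-integral.
-/

open MeasureTheory ProbabilityTheory
open scoped ENNReal

section Normalization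

variable {α : Type*} [MeasurableSpace α] {μ : Measure α} {u : α → ℝ≥0∞}

lemma lintegral_div_lintegral_le_one (hu : AEMeasurable u μ) :
    ∫⁻ a, u a / ∫⁻ b, u b ∂μ ∂μ ≤ 1 := by
  simp_rw [div_eq_mul_inv]
  rw [lintegral_mul_const'' _ hu]
  exact ENNReal.mul_inv_le_one _

lemma ae_eq_div_lintegral_mul_lintegral (hu : AEMeasurable u μ) (hfin : ∫⁻ b, u b ∂μ ≠ ∞) :
    ∀ᵐ a ∂μ, u a = u a / (∫⁻ b, u b ∂μ) * ∫⁻ b, u b ∂μ := by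
  rcases eq_or_ne (∫⁻ b, u b ∂μ) 0 with h0 | h0
  · filter_upwards [(lintegral_eq_zero_iff' hu).mp h0] with a ha
    simp [ha]
  · exact ae_of_all _ fun a => (ENNReal.div_mul_cancel h0 hfin).symm

end Normalization

section SwappedCompProd

variable {α β : Type*} [MeasurableSpace α] [MeasurableSpace β] {μ : Measure α} {κ : Kernel α β}
  [SFinite μ] [IsSFiniteKernel κ]

lemma lintegral_map_swap_compProd {f : β × α → ℝ≥0∞} (hf : Measurable f) :
    ∫⁻ x, f x ∂(μ ⊗ₘ κ).map Prod.swap = ∫⁻ a, ∫⁻ b, f (b, a) ∂κ a ∂μ := by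
  rw [lintegral_map hf measurable_swap]
  exact Measure.lintegral_compProd (hf.comp measurable_swap)

lemma ae_map_swap_compProd_iff {p : β × α → Prop} (hp : MeasurableSet {x | p x}) :
    (∀ᵐ x ∂(μ ⊗ₘ κ).map Prod.swap, p x) ↔ ∀ᵐ a ∂μ, ∀ᵐ b ∂κ a, p (b, a) := by
  rw [ae_map_iff measurable_swap.aemeasurable hp]
  exact Measure.ae_compProd_iff (measurable_swap hp)

end SwappedCompProd

/-- para-Bayesian model given by Markov kernels `P : Θ → Ω` and
`Q : Γ → Θ`, with joint statistical model `T_π` on `Ω × Θ` (the swap-pushforward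
of `(Q π) ⊗ₘ P`). If `f : Ω × Θ → [0,∞]` is measurable with `∫ f dT_π ≤ 1` for
every `π`, then there are a conditional e-function `g` w.r.t. `(P_θ)` and an
e-function `h` w.r.t. `(Q_π)` with `f = g·h` `T_π`-a.e. for every `π`; moreover
one can take `h(θ) = ∫ f(ω,θ) P_θ(dω)` and `g = f/h` (in `ℝ≥0∞`, `0/0 = 0`). -/
theorem stmt10 {Ω Θ Γ : Type*} [MeasurableSpace Ω] [MeasurableSpace Θ] [MeasurableSpace Γ]
    (P : Kernel Θ Ω) [IsMarkovKernel P]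
    (Q : Kernel Γ Θ) [IsMarkovKernel Q]
    (f : Ω × Θ → ℝ≥0∞) (hf : Measurable f)
    (hfe : ∀ π, ∫⁻ x, f x ∂(((Q π).compProd P).map Prod.swap) ≤ 1) :
    ∃ g : Ω × Θ → ℝ≥0∞, ∃ h : Θ → ℝ≥0∞,
      Measurable g ∧ (∀ θ, ∫⁻ ω, g (ω, θ) ∂(P θ) ≤ 1) ∧
      Measurable h ∧ (∀ π, ∫⁻ θ, h θ ∂(Q π) ≤ 1) ∧
      (∀ π, ∀ᵐ x ∂(((Q π).compProd P).map Prod.swap), f x = g x * h x.2) ∧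
      h = (fun θ => ∫⁻ ω, f (ω, θ) ∂(P θ)) ∧
      g = (fun x => f x / ∫⁻ ω, f (ω, x.2) ∂(P x.2)) := by
  have hh_meas : Measurable fun θ => ∫⁻ ω, f (ω, θ) ∂(P θ) :=
    (hf.comp measurable_swap).lintegral_kernel_prod_right'
  have hg_meas : Measurable fun x : Ω × Θ => f x / ∫⁻ ω, f (ω, x.2) ∂(P x.2) :=
    hf.div (hh_meas.comp measurable_snd)
  have hf_section : ∀ θ, AEMeasurable (fun ω => f (ω, θ)) (P θ) :=
    fun θ => (hf.comp measurable_prodMk_right).aemeasurable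
  have hh_le : ∀ π, ∫⁻ θ, ∫⁻ ω, f (ω, θ) ∂(P θ) ∂(Q π) ≤ 1 :=
    fun π => by simpa only [lintegral_map_swap_compProd hf] using hfe π
  refine ⟨_, _, hg_meas, fun θ => lintegral_div_lintegral_le_one (hf_section θ), hh_meas, hh_le,
    fun π => ?_, rfl, rfl⟩
  refine (ae_map_swap_compProd_iff
    (measurableSet_eq_fun hf (hg_meas.mul (hh_meas.comp measurable_snd)))).mpr ?_
  filter_upwards [ae_lt_top hh_meas ((hh_le π).trans_lt ENNReal.one_lt_top).ne] with θ hθ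
  exact ae_eq_div_lintegral_mul_lintegral (hf_section θ) hθ.ne
end

section
/- Fix N ≥ 1, Ω = {0,1}^N, and κ ∈ (0,1). Call f : Ω → [0,1] a Bernoulli p-function if B_p{f ≤ ε} ≤ ε for all p ∈ [0,1] and ε > 0, an exchangeable p-function if P{f ≤ ε} ≤ ε for every exchangeable probability measure P on Ω and ε > 0, and call h : {0,…,N} → [0,1] a binomial p-function if Σ_{k : h(k) ≤ ε} binom(N,k)p^k(1−p)^{N−k} ≤ ε for all p ∈ [0,1], ε > 0. Then: (a) for every Bernoulli p-function f there exist an exchangeable p-function g and a binomial p-function h such that for every p ∈ [0,1], g(ω)·h(+ω) ≤ κ^{−1}·f(ω)^{1−κ} for B_p-almost every ω; (b) for every exchangeable p-function g and binomial p-function h, the function ω ↦ min(1, κ^{−2}·(g(ω)·h(+ω))^{1−κ}) is a Bernoulli p-function. -/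
/-!
Everything decomposes along the levels `{ω | cnt ω = k}`: a measure whose point masses depend
only on `cnt` (every exchangeable measure, and `B_p`) is, on each level, a multiple of the uniform
distribution on that level.

For (a), `g ω` is the rank of `f ω` within the level of `ω`, a p-function under every uniform
level distribution and hence under every exchangeable one; `h k` is the largest value that the
required inequality allows on level `k`. For (b), the event lies in `{g * h (cnt ω) ≤ δ}` with
`δ ^ (1 - κ) = κ ^ 2 * ε`, and on level `k` this has conditional probability at most
`min 1 (δ / h k) ≤ (δ / h k) ^ (1 - κ)`.

Both binomial estimates then rest on a discrete form of `E[U ^ (-θ)] ≤ 1 / (1 - θ)` for a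
p-variable `U`: if `∑_{v j ≤ v i} b j ≤ v i` for all `i`, then
`(1 - θ) * ∑ b i * v i ^ (-θ) ≤ (∑ b i) ^ (1 - θ)`. It follows by removing the largest `v i` and
using the tangent line bound of the concave map `x ↦ x ^ (1 - θ)`. In (a) it is applied with
`v k = f (W k)` for a worst point `W k` of each level `k` with `h k ≤ ε`.
-/

open MeasureTheory
open scoped ENNReal

/-- `cnt ω` is the number of 1s (`true`s) in the binary sequence `ω`. -/
def cnt {N : ℕ} (ω : Fin N → Bool) : ℕ := (Finset.univ.filter fun i => ω i = true).card

/-- The Bernoulli measure `B_p` on `{0,1}^N`: `B_p({ω}) = p^{+ω} (1-p)^{N-+ω}`. -/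
noncomputable def bern (N : ℕ) (p : ℝ≥0∞) : Measure (Fin N → Bool) :=
  ∑ ω : Fin N → Bool, (p ^ cnt ω * (1 - p) ^ (N - cnt ω)) • Measure.dirac ω

/-- The binomial measure `bin_p` on `ℕ` (supported on `{0,…,N}`):
`bin_p({k}) = binom(N,k) p^k (1-p)^{N-k}`. -/
noncomputable def binMeasure (N : ℕ) (p : ℝ≥0∞) : Measure ℕ :=
  ∑ k ∈ Finset.range (N + 1),
    ((N.choose k : ℝ≥0∞) * p ^ k * (1 - p) ^ (N - k)) • Measure.dirac k

open Finset ProbabilityTheory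

section RPow

variable {θ : ℝ}

lemma Real.rpow_add_mul_mul_rpow_neg_le (hθ0 : 0 ≤ θ) (hθ1 : θ ≤ 1) {y b : ℝ} (hy : 0 ≤ y)
    (hby : 0 < b + y) :
    y ^ (1 - θ) + (1 - θ) * (b * (b + y) ^ (-θ)) ≤ (b + y) ^ (1 - θ) := by
  set x := b + y
  have hx : x ^ (1 - θ) = x * x ^ (-θ) := by
    rw [sub_eq_add_neg, Real.rpow_add hby, Real.rpow_one]
  have bernoulli := rpow_one_add_le_one_add_mul_self (s := y / x - 1)
    (by linarith [div_nonneg hy hby.le]) (by linarith : 0 ≤ 1 - θ) (by linarith : 1 - θ ≤ 1)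
  rw [add_sub_cancel, Real.div_rpow hy hby.le, div_le_iff₀ (by positivity)] at bernoulli
  calc y ^ (1 - θ) + (1 - θ) * (b * x ^ (-θ))
      ≤ (1 + (1 - θ) * (y / x - 1)) * x ^ (1 - θ) + (1 - θ) * (b * x ^ (-θ)) := by
        gcongr
    _ = x ^ (1 - θ) := by
        rw [hx]
        field_simp
        ring

lemma ENNReal.rpow_add_mul_mul_rpow_neg_le (hθ0 : 0 ≤ θ) (hθ1 : θ < 1) (y b : ℝ≥0∞) :
    y ^ (1 - θ) + ENNReal.ofReal (1 - θ) * (b * (b + y) ^ (-θ)) ≤ (b + y) ^ (1 - θ) := by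
  have hθ : 0 < 1 - θ := by linarith
  rcases eq_or_ne (b + y) ⊤ with htop | htop
  · simp [htop, hθ]
  rcases eq_or_ne (b + y) 0 with hzero | hzero
  · obtain ⟨rfl, rfl⟩ := add_eq_zero.1 hzero
    simp [hθ]
  have hb : b ≠ ⊤ := fun h => htop (by simp [h])
  have hy : y ≠ ⊤ := fun h => htop (by simp [h])
  have hpos : 0 < b.toReal + y.toReal := by
    rw [← ENNReal.toReal_add hb hy]
    exact ENNReal.toReal_pos hzero htop
  rw [← ENNReal.ofReal_toReal hb, ← ENNReal.ofReal_toReal hy,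
    ← ENNReal.ofReal_add ENNReal.toReal_nonneg ENNReal.toReal_nonneg,
    ENNReal.ofReal_rpow_of_nonneg ENNReal.toReal_nonneg hθ.le,
    ENNReal.ofReal_rpow_of_pos hpos, ENNReal.ofReal_rpow_of_pos hpos,
    ← ENNReal.ofReal_mul ENNReal.toReal_nonneg, ← ENNReal.ofReal_mul hθ.le,
    ← ENNReal.ofReal_add (by positivity) (by positivity)]
  exact ENNReal.ofReal_le_ofReal
    (Real.rpow_add_mul_mul_rpow_neg_le hθ0 hθ1.le ENNReal.toReal_nonneg hpos)

lemma ENNReal.min_one_le_rpow (hθ0 : 0 ≤ θ) (hθ1 : θ ≤ 1) (x : ℝ≥0∞) : min 1 x ≤ x ^ θ := by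
  rcases le_total x 1 with hx | hx
  · calc min 1 x ≤ x ^ (1 : ℝ) := (min_le_right 1 x).trans_eq (ENNReal.rpow_one x).symm
      _ ≤ x ^ θ := ENNReal.rpow_le_rpow_of_exponent_ge hx hθ1
  · calc min 1 x ≤ x ^ (0 : ℝ) := (min_le_left 1 x).trans_eq ENNReal.rpow_zero.symm
      _ ≤ x ^ θ := ENNReal.rpow_le_rpow_of_exponent_le hx hθ0

lemma ENNReal.le_mul_mul_rpow_neg (hθ : 0 < θ) {a c : ℝ≥0∞} (hc0 : c ≠ 0) (hctop : c ≠ ⊤)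
    (h : a ^ θ ≤ c) (w : ℝ≥0∞) : w ≤ c * w * a ^ (-θ) := by
  rcases eq_or_ne w 0 with rfl | hw
  · exact zero_le
  rcases eq_or_ne a 0 with rfl | ha0
  · simp [ENNReal.zero_rpow_of_neg (neg_neg_of_pos hθ), hc0, hw]
  have hatop : a ≠ ⊤ := by
    rintro rfl
    exact hctop (top_le_iff.1 (by simpa [hθ] using h))
  have hθa0 : a ^ θ ≠ 0 := (ENNReal.rpow_pos (pos_iff_ne_zero.2 ha0) hatop).ne'
  have hθatop : a ^ θ ≠ ⊤ := ne_top_of_le_ne_top hctop h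
  calc w = a ^ θ * w * a ^ (-θ) := by
        rw [ENNReal.rpow_neg, mul_comm (a ^ θ), mul_assoc, ENNReal.mul_inv_cancel hθa0 hθatop,
          mul_one]
    _ ≤ c * w * a ^ (-θ) := by gcongr

end RPow

theorem ofReal_mul_sum_mul_rpow_neg_le {ι : Type*} {θ : ℝ} (hθ0 : 0 ≤ θ) (hθ1 : θ < 1)
    (s : Finset ι) (b v : ι → ℝ≥0∞) (h : ∀ i ∈ s, ∑ j ∈ s with v j ≤ v i, b j ≤ v i) :
    ENNReal.ofReal (1 - θ) * ∑ i ∈ s, b i * v i ^ (-θ) ≤ (∑ i ∈ s, b i) ^ (1 - θ) := by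
  classical
  induction s using Finset.induction_on_max_value v with
  | empty => simp
  | insert a s has hmax ih =>
    have hs : ∀ i ∈ s, ∑ j ∈ s with v j ≤ v i, b j ≤ v i := fun i hi =>
      (sum_le_sum_of_subset (filter_subset_filter _ (subset_insert a s))).trans
        (h i (mem_insert_of_mem hi))
    have hsum : b a + ∑ i ∈ s, b i ≤ v a := by
      have := h a (mem_insert_self a s)
      rwa [filter_true_of_mem fun j hj => ?_, sum_insert has] at this
      rcases mem_insert.1 hj with rfl | hj
      exacts [le_rfl, hmax j hj]
    have hva : v a ^ (-θ) ≤ (b a + ∑ i ∈ s, b i) ^ (-θ) := by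
      rw [ENNReal.rpow_neg, ENNReal.rpow_neg]
      exact ENNReal.inv_le_inv.2 (ENNReal.rpow_le_rpow hsum hθ0)
    calc ENNReal.ofReal (1 - θ) * ∑ i ∈ insert a s, b i * v i ^ (-θ)
        = ENNReal.ofReal (1 - θ) * ∑ i ∈ s, b i * v i ^ (-θ)
          + ENNReal.ofReal (1 - θ) * (b a * v a ^ (-θ)) := by
          rw [sum_insert has, mul_add, add_comm]
      _ ≤ (∑ i ∈ s, b i) ^ (1 - θ)
          + ENNReal.ofReal (1 - θ) * (b a * (b a + ∑ i ∈ s, b i) ^ (-θ)) := by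
          gcongr
          exact ih hs
      _ ≤ (b a + ∑ i ∈ s, b i) ^ (1 - θ) := ENNReal.rpow_add_mul_mul_rpow_neg_le hθ0 hθ1 _ _
      _ = (∑ i ∈ insert a s, b i) ^ (1 - θ) := by rw [sum_insert has]

section PFunction

variable {Ω : Type*} [MeasurableSpace Ω]

def IsPFunction (μ : Measure Ω) (f : Ω → ℝ≥0∞) : Prop :=
  ∀ ε : ℝ≥0∞, 0 < ε → μ {x | f x ≤ ε} ≤ ε

lemma IsPFunction.measure_le {μ : Measure Ω} {f : Ω → ℝ≥0∞} (hf : IsPFunction μ f)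
    (t : ℝ≥0∞) : μ {x | f x ≤ t} ≤ t := by
  rcases eq_or_ne t 0 with rfl | ht
  · refine le_of_forall_gt_imp_ge_of_dense fun ε hε => ?_
    exact (measure_mono fun x (hx : f x ≤ 0) => hx.trans hε.le).trans (hf ε hε)
  · exact hf t (pos_iff_ne_zero.2 ht)

end PFunction

section UniformOn

variable {Ω : Type*} [MeasurableSpace Ω] [MeasurableSingletonClass Ω]

lemma measure_inter_eq_mul_uniformOn (P : Measure Ω) {L : Set Ω} (hL : L.Finite)
    (hP : ∀ x ∈ L, ∀ y ∈ L, P {x} = P {y}) (A : Set Ω) :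
    P (A ∩ L) = P L * uniformOn L A := by
  rcases L.eq_empty_or_nonempty with rfl | ⟨x₀, hx₀⟩
  · simp
  have hcount : ∀ T ⊆ L, P T = P {x₀} * Measure.count T := by
    intro T hT
    have hTf := hL.subset hT
    rw [← hTf.coe_toFinset, ← sum_measure_singleton, Measure.count_apply_finset,
      sum_congr rfl fun x hx => hP x (hT (hTf.mem_toFinset.1 hx)) x₀ hx₀, sum_const,
      nsmul_eq_mul, mul_comm]
  have hL0 : Measure.count L ≠ 0 := Measure.count_ne_zero_iff.2 ⟨x₀, hx₀⟩
  have hLtop : Measure.count L ≠ ⊤ := (Measure.count_apply_lt_top.2 hL).ne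
  rw [uniformOn, cond_apply hL.measurableSet, hcount _ Set.inter_subset_right,
    hcount L subset_rfl, Set.inter_comm, mul_assoc, ENNReal.mul_inv_cancel_left hL0 hLtop]

lemma isPFunction_uniformOn_rank {β : Type*} [LinearOrder β] {L : Set Ω} (hL : L.Finite)
    (f : Ω → β) : IsPFunction (uniformOn L) fun x => uniformOn L {y | f y ≤ f x} := by
  intro ε _
  rw [← uniformOn_inter_self hL]
  rcases (L ∩ {x | uniformOn L {y | f y ≤ f x} ≤ ε}).eq_empty_or_nonempty with hA | hA
  · simp [hA]
  -- the set is contained in `{y | f y ≤ f x}` for its `f`-largest point `x`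
  obtain ⟨x, hx, hmax⟩ := Set.exists_max_image _ f (hL.subset Set.inter_subset_left) hA
  exact (measure_mono fun y hy => hmax y hy).trans hx.2

end UniformOn

section Levels

variable {N : ℕ}

def level (N k : ℕ) : Finset (Fin N → Bool) := {ω | cnt ω = k}

@[simp] lemma mem_level {k : ℕ} {ω : Fin N → Bool} : ω ∈ level N k ↔ cnt ω = k := by
  simp [level]

lemma cnt_le (ω : Fin N → Bool) : cnt ω ≤ N :=
  (card_filter_le _ _).trans (card_fin N).le

lemma card_level (k : ℕ) : #(level N k) = N.choose k := by
  rw [show N.choose k = #(powersetCard k (univ : Finset (Fin N))) by simp]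
  refine card_nbij' (fun ω => ({i | ω i = true} : Finset (Fin N))) (fun s i => decide (i ∈ s))
    ?_ ?_ ?_ ?_
  · intro ω hω
    simpa [cnt] using hω
  · intro s hs
    simp_all [cnt]
  · intro ω _
    funext i
    simp
  · intro s _
    ext i
    simp

lemma cnt_comp_perm (π : Equiv.Perm (Fin N)) (ω : Fin N → Bool) :
    cnt (fun i => ω (π i)) = cnt ω := by
  unfold cnt
  refine card_nbij' π π.symm ?_ ?_ ?_ ?_ <;> simp [Set.MapsTo, Set.LeftInvOn, Set.RightInvOn]

lemma exists_perm_eq_comp_of_cnt_eq {ω ω' : Fin N → Bool} (h : cnt ω = cnt ω') :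
    ∃ π : Equiv.Perm (Fin N), ω' = fun i => ω (π i) := by
  have htrue : Fintype.card {i // ω' i = true} = Fintype.card {i // ω i = true} := by
    rw [Fintype.card_subtype, Fintype.card_subtype]
    exact h.symm
  have hfalse : Fintype.card {i // ¬ω' i = true} = Fintype.card {i // ¬ω i = true} := by
    rw [Fintype.card_subtype_compl, Fintype.card_subtype_compl, htrue]
  refine ⟨(Fintype.equivOfCardEq htrue).subtypeCongr (Fintype.equivOfCardEq hfalse), ?_⟩
  funext i
  by_cases hi : ω' i = true
  · simp [Equiv.subtypeCongr, hi, ((Fintype.equivOfCardEq htrue) ⟨i, hi⟩).2]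
  · simpa [Equiv.subtypeCongr, hi] using ((Fintype.equivOfCardEq hfalse) ⟨i, hi⟩).2

lemma measure_biUnion_inter_level (P : Measure (Fin N → Bool)) (s : Finset ℕ)
    (A : ℕ → Set (Fin N → Bool)) :
    P (⋃ k ∈ s, A k ∩ level N k) = ∑ k ∈ s, P (A k ∩ level N k) := by
  refine measure_biUnion_finset (fun j _ k _ hjk => ?_) fun _ _ => .of_discrete
  refine Set.disjoint_left.2 fun ω hj hk => hjk ?_
  simp only [Set.mem_inter_iff, mem_coe, mem_level] at hj hk
  exact hj.2.symm.trans hk.2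

lemma measure_eq_sum_inter_level (P : Measure (Fin N → Bool)) (S : Set (Fin N → Bool)) :
    P S = ∑ k ∈ range (N + 1), P (S ∩ level N k) := by
  rw [← measure_biUnion_inter_level]
  congr
  ext ω
  simpa using fun _ => Nat.lt_succ_of_le (cnt_le ω)

lemma isProbabilityMeasure_uniformOn_level {k : ℕ} (hk : k ≤ N) :
    IsProbabilityMeasure (uniformOn (level N k : Set (Fin N → Bool))) :=
  isProbabilityMeasure_uniformOn (level N k).finite_toSet
    (coe_nonempty.2 (card_pos.1 (by simpa [card_level] using Nat.choose_pos hk)))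

lemma measure_inter_level_eq_mul_uniformOn (P : Measure (Fin N → Bool))
    (hP : ∀ ω ω', cnt ω = cnt ω' → P {ω} = P {ω'}) (A : Set (Fin N → Bool)) (k : ℕ) :
    P (A ∩ level N k) = P (level N k) * uniformOn (level N k) A :=
  measure_inter_eq_mul_uniformOn P (level N k).finite_toSet
    (fun x hx y hy => hP x y (by simp_all)) A

lemma IsPFunction.ofReal_mul_sum_measure_inter_level_mul_rpow_neg_le
    {P : Measure (Fin N → Bool)} [IsProbabilityMeasure P] {f : (Fin N → Bool) → ℝ≥0∞}
    (hf : IsPFunction P f) {θ : ℝ} (hθ0 : 0 ≤ θ) (hθ1 : θ < 1) (K : Finset ℕ)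
    (v : ℕ → ℝ≥0∞) :
    ENNReal.ofReal (1 - θ) * ∑ k ∈ K, P ({ω | f ω ≤ v k} ∩ level N k) * v k ^ (-θ) ≤ 1 := by
  refine (ofReal_mul_sum_mul_rpow_neg_le hθ0 hθ1 K _ v fun k _ => ?_).trans ?_
  · rw [← measure_biUnion_inter_level]
    refine (measure_mono ?_).trans (hf.measure_le (v k))
    simp only [Set.iUnion_subset_iff, mem_filter]
    exact fun j hj ω hω => hω.1.trans hj.2
  · rw [← measure_biUnion_inter_level]
    exact ENNReal.rpow_le_one prob_le_one (by linarith)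

end Levels

def Exchangeable {ι β : Type*} [MeasurableSpace β] (P : Measure (ι → β)) : Prop :=
  ∀ π : Equiv.Perm ι, P.map (fun ω i => ω (π i)) = P

section Exchangeable

variable {N : ℕ}

lemma exchangeable_iff_measure_singleton {P : Measure (Fin N → Bool)} :
    Exchangeable P ↔ ∀ (π : Equiv.Perm (Fin N)) ω, P {fun i => ω (π i)} = P {ω} := by
  have hpre : ∀ (π : Equiv.Perm (Fin N)) ω,
      (fun (x : Fin N → Bool) i => x (π i)) ⁻¹' {ω} = {fun i => ω (π.symm i)} := by
    intro π ω
    ext x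
    simp only [Set.mem_preimage, Set.mem_singleton_iff, funext_iff]
    exact ⟨fun h i => by simpa using h (π.symm i), fun h i => by simp [h]⟩
  have hmeas : ∀ π : Equiv.Perm (Fin N), Measurable fun (x : Fin N → Bool) i => x (π i) :=
    fun π => measurable_pi_lambda _ fun i => measurable_pi_apply (π i)
  simp only [Exchangeable, Measure.ext_iff_singleton,
    Measure.map_apply (hmeas _) (measurableSet_singleton _), hpre]
  refine ⟨fun h π ω => ?_, fun h π ω => h π.symm ω⟩
  simpa using h π.symm ω

lemma Exchangeable.measure_singleton_eq {P : Measure (Fin N → Bool)} (hP : Exchangeable P)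
    {ω ω' : Fin N → Bool} (h : cnt ω = cnt ω') : P {ω} = P {ω'} := by
  obtain ⟨π, rfl⟩ := exists_perm_eq_comp_of_cnt_eq h
  exact (exchangeable_iff_measure_singleton.1 hP π ω).symm

lemma exchangeable_uniformOn_level (k : ℕ) :
    Exchangeable (uniformOn (level N k : Set (Fin N → Bool))) := by
  refine exchangeable_iff_measure_singleton.2 fun π ω => ?_
  rw [uniformOn, cond_apply (level N k).finite_toSet.measurableSet,
    cond_apply (level N k).finite_toSet.measurableSet]
  by_cases h : cnt ω = k <;> simp [cnt_comp_perm, h]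

end Exchangeable

section Bernoulli

variable {N : ℕ} {p : ℝ≥0∞}

noncomputable def binWeight (N : ℕ) (p : ℝ≥0∞) (k : ℕ) : ℝ≥0∞ :=
  N.choose k * p ^ k * (1 - p) ^ (N - k)

lemma sum_binWeight (hp : p ≤ 1) : ∑ k ∈ range (N + 1), binWeight N p k = 1 := by
  simp_rw [binWeight, mul_comm (N.choose _ : ℝ≥0∞), mul_right_comm _ (N.choose _ : ℝ≥0∞)]
  rw [← add_pow, add_tsub_cancel_of_le hp, one_pow]

lemma binMeasure_apply (S : Set ℕ) [DecidablePred (· ∈ S)] :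
    binMeasure N p S = ∑ k ∈ range (N + 1) with k ∈ S, binWeight N p k := by
  simp [binMeasure, Measure.dirac_apply', Set.indicator_apply, sum_filter, binWeight]

lemma isProbabilityMeasure_binMeasure (hp : p ≤ 1) : IsProbabilityMeasure (binMeasure N p) :=
  ⟨by simpa [binMeasure_apply] using sum_binWeight hp⟩

lemma bern_singleton (ω : Fin N → Bool) :
    bern N p {ω} = p ^ cnt ω * (1 - p) ^ (N - cnt ω) := by
  simp [bern, Measure.dirac_apply', Set.indicator_apply]

lemma bern_level (k : ℕ) : bern N p (level N k) = binWeight N p k := by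
  have hconst : ∀ ω ∈ level N k, bern N p {ω} = p ^ k * (1 - p) ^ (N - k) := fun ω hω => by
    rw [bern_singleton, mem_level.1 hω]
  rw [← sum_measure_singleton, sum_congr rfl hconst, sum_const, card_level, nsmul_eq_mul,
    binWeight, mul_assoc]

lemma isProbabilityMeasure_bern (hp : p ≤ 1) : IsProbabilityMeasure (bern N p) := by
  constructor
  rw [measure_eq_sum_inter_level]
  simpa [bern_level] using sum_binWeight hp

lemma bern_inter_level (A : Set (Fin N → Bool)) (k : ℕ) :
    bern N p (A ∩ level N k) = binWeight N p k * uniformOn (level N k) A := by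
  rw [measure_inter_level_eq_mul_uniformOn _ (fun ω ω' h => by simp [bern_singleton, h]),
    bern_level]

lemma IsPFunction.ofReal_mul_sum_binWeight_mul_rpow_neg_le (hp : p ≤ 1) {h : ℕ → ℝ≥0∞}
    (hh : IsPFunction (binMeasure N p) h) {θ : ℝ} (hθ0 : 0 ≤ θ) (hθ1 : θ < 1) :
    ENNReal.ofReal (1 - θ) * ∑ k ∈ range (N + 1), binWeight N p k * h k ^ (-θ) ≤ 1 := by
  have := ofReal_mul_sum_mul_rpow_neg_le hθ0 hθ1 (range (N + 1)) (binWeight N p) h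
    fun k _ => (binMeasure_apply {j | h j ≤ h k}).symm.trans_le (hh.measure_le (h k))
  rwa [sum_binWeight hp, ENNReal.one_rpow] at this

lemma bern_inter_level_le {g : (Fin N → Bool) → ℝ≥0∞}
    (hg : ∀ (P : Measure (Fin N → Bool)) [IsProbabilityMeasure P], Exchangeable P →
      IsPFunction P g)
    {θ : ℝ} (hθ0 : 0 ≤ θ) (hθ1 : θ ≤ 1) {δ : ℝ≥0∞} (hδ0 : δ ≠ 0) (hδtop : δ ≠ ⊤) (c : ℝ≥0∞)
    {k : ℕ} (hk : k ≤ N) :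
    bern N p ({ω | g ω * c ≤ δ} ∩ level N k) ≤ binWeight N p k * (δ ^ θ * c ^ (-θ)) := by
  have := isProbabilityMeasure_uniformOn_level hk
  have hdiv : {ω | g ω * c ≤ δ} ⊆ {ω | g ω ≤ δ / c} := fun ω hω =>
    (ENNReal.le_div_iff_mul_le (Or.inr hδ0) (Or.inr hδtop)).2 hω
  calc bern N p ({ω | g ω * c ≤ δ} ∩ level N k)
      = binWeight N p k * uniformOn (level N k : Set (Fin N → Bool)) {ω | g ω * c ≤ δ} :=
        bern_inter_level _ k
    _ ≤ binWeight N p k * min 1 (δ / c) := by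
        gcongr
        exact le_min prob_le_one ((measure_mono hdiv).trans
          ((hg _ (exchangeable_uniformOn_level k)).measure_le _))
    _ ≤ binWeight N p k * (δ / c) ^ θ := by
        gcongr
        exact ENNReal.min_one_le_rpow hθ0 hθ1 _
    _ = binWeight N p k * (δ ^ θ * c ^ (-θ)) := by
        rw [ENNReal.div_rpow_of_nonneg _ _ hθ0, div_eq_mul_inv, ENNReal.rpow_neg]

end Bernoulli

section LevelRank

variable {N : ℕ} {β : Type*} [LinearOrder β]

noncomputable def levelRank (f : (Fin N → Bool) → β) (ω : Fin N → Bool) : ℝ≥0∞ :=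
  uniformOn (level N (cnt ω) : Set (Fin N → Bool)) {ω' | f ω' ≤ f ω}

lemma levelRank_le_one (f : (Fin N → Bool) → β) (ω : Fin N → Bool) : levelRank f ω ≤ 1 :=
  have := isProbabilityMeasure_uniformOn_level (cnt_le ω)
  prob_le_one

lemma levelRank_ne_top (f : (Fin N → Bool) → β) (ω : Fin N → Bool) : levelRank f ω ≠ ⊤ :=
  ne_top_of_le_ne_top ENNReal.one_ne_top (levelRank_le_one f ω)

lemma levelRank_ne_zero (f : (Fin N → Bool) → β) (ω : Fin N → Bool) : levelRank f ω ≠ 0 := by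
  rw [levelRank, Ne, uniformOn_eq_zero_iff (level N _).finite_toSet]
  exact Set.nonempty_iff_ne_empty.1 ⟨ω, by simp, le_rfl⟩

lemma uniformOn_level_levelRank_le (f : (Fin N → Bool) → β) (k : ℕ) (ε : ℝ≥0∞) :
    uniformOn (level N k : Set (Fin N → Bool)) {ω | levelRank f ω ≤ ε} ≤ ε := by
  set L : Set (Fin N → Bool) := ↑(level N k)
  have hL : L.Finite := (level N k).finite_toSet
  have hrank : L ∩ {ω | levelRank f ω ≤ ε} = L ∩ {ω | uniformOn L {ω' | f ω' ≤ f ω} ≤ ε} := by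
    ext ω
    simp +contextual [L, levelRank]
  rw [← uniformOn_inter_self hL, hrank, uniformOn_inter_self hL]
  exact (isPFunction_uniformOn_rank hL f).measure_le ε

lemma Exchangeable.isPFunction_levelRank {P : Measure (Fin N → Bool)} [IsProbabilityMeasure P]
    (hP : Exchangeable P) (f : (Fin N → Bool) → β) : IsPFunction P (levelRank f) := by
  intro ε _
  have hconst : ∀ ω ω', cnt ω = cnt ω' → P {ω} = P {ω'} := fun _ _ => hP.measure_singleton_eq
  calc P {ω | levelRank f ω ≤ ε}
      = ∑ k ∈ range (N + 1),
          P (level N k) * uniformOn (level N k : Set (Fin N → Bool)) {ω | levelRank f ω ≤ ε} := by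
        rw [measure_eq_sum_inter_level P]
        exact sum_congr rfl fun k _ => measure_inter_level_eq_mul_uniformOn P hconst _ k
    _ ≤ ∑ k ∈ range (N + 1), P (level N k) * ε := by
        gcongr
        exact uniformOn_level_levelRank_le f _ ε
    _ = ε := by
        rw [← sum_mul]
        simpa using congrArg (· * ε) (measure_eq_sum_inter_level P Set.univ).symm

end LevelRank

section LevelBound

variable {N : ℕ} {κ : ℝ}

noncomputable def levelBound (κ : ℝ) (f : (Fin N → Bool) → ℝ≥0∞) (k : ℕ) : ℝ≥0∞ :=
  min 1 ((level N k).inf fun ω => (ENNReal.ofReal κ)⁻¹ * f ω ^ (1 - κ) / levelRank f ω)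

lemma levelRank_mul_levelBound_le (κ : ℝ) (f : (Fin N → Bool) → ℝ≥0∞) (ω : Fin N → Bool) :
    levelRank f ω * levelBound κ f (cnt ω) ≤ (ENNReal.ofReal κ)⁻¹ * f ω ^ (1 - κ) :=
  calc levelRank f ω * levelBound κ f (cnt ω)
      ≤ levelRank f ω * ((ENNReal.ofReal κ)⁻¹ * f ω ^ (1 - κ) / levelRank f ω) := by
        gcongr
        exact (min_le_right _ _).trans (inf_le (by simp))
    _ = (ENNReal.ofReal κ)⁻¹ * f ω ^ (1 - κ) :=
        ENNReal.mul_div_cancel (levelRank_ne_zero f ω) (levelRank_ne_top f ω)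

lemma exists_mem_level_rpow_le_of_levelBound_le (hκ : 0 < κ) {f : (Fin N → Bool) → ℝ≥0∞}
    {k : ℕ} {ε : ℝ≥0∞} (hε1 : ε < 1) (hk : levelBound κ f k ≤ ε) :
    ∃ ω ∈ level N k, f ω ^ (1 - κ) ≤ ENNReal.ofReal κ * ε * levelRank f ω := by
  have hinf := (min_le_iff.1 hk).resolve_left (not_le.2 hε1)
  obtain ⟨ω, hω, hωε⟩ := (Finset.inf_le_iff (hε1.trans ENNReal.one_lt_top)).1 hinf
  refine ⟨ω, hω, ?_⟩
  rwa [ENNReal.div_le_iff (levelRank_ne_zero f ω) (levelRank_ne_top f ω),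
    ENNReal.inv_mul_le_iff (by simpa using hκ) ENNReal.ofReal_ne_top, ← mul_assoc] at hωε

theorem isPFunction_binMeasure_levelBound (hκ : κ ∈ Set.Ioo (0 : ℝ) 1)
    {f : (Fin N → Bool) → ℝ≥0∞} {p : ℝ≥0∞} (hp : p ≤ 1) (hf : IsPFunction (bern N p) f) :
    IsPFunction (binMeasure N p) (levelBound κ f) := by
  intro ε hε
  have := isProbabilityMeasure_binMeasure (N := N) hp
  have := isProbabilityMeasure_bern (N := N) hp
  rcases le_or_gt 1 ε with hε1 | hε1
  · exact prob_le_one.trans hε1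
  set K := (range (N + 1)).filter (· ∈ {k | levelBound κ f k ≤ ε})
  choose! W hWlevel hW using fun k (hk : k ∈ K) =>
    exists_mem_level_rpow_le_of_levelBound_le hκ.1 hε1 (mem_filter.1 hk).2
  have hmoment := hf.ofReal_mul_sum_measure_inter_level_mul_rpow_neg_le (θ := 1 - κ)
    (by linarith [hκ.2]) (by linarith [hκ.1]) K fun k => f (W k)
  rw [sub_sub_cancel] at hmoment
  calc binMeasure N p {k | levelBound κ f k ≤ ε} = ∑ k ∈ K, binWeight N p k := binMeasure_apply _
    _ ≤ ∑ k ∈ K, ENNReal.ofReal κ * ε * levelRank f (W k) * binWeight N p k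
          * f (W k) ^ (-(1 - κ)) := by
        refine sum_le_sum fun k hk => ENNReal.le_mul_mul_rpow_neg (by linarith [hκ.2]) ?_ ?_
          (hW k hk) _
        · exact mul_ne_zero (mul_ne_zero (by simpa using hκ.1) hε.ne') (levelRank_ne_zero f _)
        · exact ENNReal.mul_ne_top (ENNReal.mul_ne_top ENNReal.ofReal_ne_top
            (hε1.trans ENNReal.one_lt_top).ne) (levelRank_ne_top f _)
    _ = ε * (ENNReal.ofReal κ
          * ∑ k ∈ K, bern N p ({ω | f ω ≤ f (W k)} ∩ level N k) * f (W k) ^ (-(1 - κ))) := by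
        rw [mul_sum, mul_sum]
        refine sum_congr rfl fun k hk => ?_
        rw [bern_inter_level, levelRank, mem_level.1 (hWlevel k hk)]
        ring
    _ ≤ ε := mul_le_of_le_one_right' hmoment

end LevelBound

theorem isPFunction_bern_min {N : ℕ} {κ : ℝ} (hκ : κ ∈ Set.Ioo (0 : ℝ) 1)
    {g : (Fin N → Bool) → ℝ≥0∞} {h : ℕ → ℝ≥0∞} {p : ℝ≥0∞} (hp : p ≤ 1)
    (hg : ∀ (P : Measure (Fin N → Bool)) [IsProbabilityMeasure P], Exchangeable P →
      IsPFunction P g)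
    (hh : IsPFunction (binMeasure N p) h) :
    IsPFunction (bern N p)
      fun ω => min 1 ((ENNReal.ofReal κ ^ 2)⁻¹ * (g ω * h (cnt ω)) ^ (1 - κ)) := by
  intro ε hε
  have := isProbabilityMeasure_bern (N := N) hp
  rcases le_or_gt 1 ε with hε1 | hε1
  · exact prob_le_one.trans hε1
  have hκ2 : ENNReal.ofReal κ ^ 2 ≠ 0 := pow_ne_zero 2 (by simpa using hκ.1)
  have hθ : 0 < 1 - κ := by linarith [hκ.2]
  set δ := (ENNReal.ofReal κ ^ 2 * ε) ^ (1 - κ)⁻¹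
  have hδ : δ ^ (1 - κ) = ENNReal.ofReal κ ^ 2 * ε := by
    rw [← ENNReal.rpow_mul, inv_mul_cancel₀ hθ.ne', ENNReal.rpow_one]
  have hδ0 : δ ≠ 0 := ENNReal.rpow_pos (pos_iff_ne_zero.2 (mul_ne_zero hκ2 hε.ne'))
    (ENNReal.mul_ne_top (by simp) (hε1.trans ENNReal.one_lt_top).ne) |>.ne'
  have hδtop : δ ≠ ⊤ := ENNReal.rpow_ne_top_of_nonneg (inv_nonneg.2 hθ.le)
    (ENNReal.mul_ne_top (by simp) (hε1.trans ENNReal.one_lt_top).ne)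
  have hsub : {ω | min 1 ((ENNReal.ofReal κ ^ 2)⁻¹ * (g ω * h (cnt ω)) ^ (1 - κ)) ≤ ε}
      ⊆ ⋃ k ∈ range (N + 1), {ω | g ω * h k ≤ δ} ∩ level N k := by
    intro ω hω
    have hle := (min_le_iff.1 hω).resolve_left (not_le.2 hε1)
    rw [ENNReal.inv_mul_le_iff hκ2 (by simp), ← hδ, ENNReal.rpow_le_rpow_iff hθ] at hle
    exact Set.mem_iUnion₂.2 ⟨cnt ω, mem_range.2 (Nat.lt_succ_of_le (cnt_le ω)), hle, by simp⟩
  have hmoment := hh.ofReal_mul_sum_binWeight_mul_rpow_neg_le hp hθ.le (by linarith [hκ.1])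
  rw [sub_sub_cancel] at hmoment
  calc _ ≤ bern N p (⋃ k ∈ range (N + 1), {ω | g ω * h k ≤ δ} ∩ level N k) := measure_mono hsub
    _ = ∑ k ∈ range (N + 1), bern N p ({ω | g ω * h k ≤ δ} ∩ level N k) :=
        measure_biUnion_inter_level _ _ _
    _ ≤ ∑ k ∈ range (N + 1), binWeight N p k * (δ ^ (1 - κ) * h k ^ (-(1 - κ))) :=
        sum_le_sum fun k hk => bern_inter_level_le hg hθ.le (by linarith [hκ.1]) hδ0 hδtop _
          (Nat.lt_succ_iff.1 (mem_range.1 hk))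
    _ = ENNReal.ofReal κ * ε
          * (ENNReal.ofReal κ * ∑ k ∈ range (N + 1), binWeight N p k * h k ^ (-(1 - κ))) := by
        rw [hδ, mul_sum, mul_sum]
        exact sum_congr rfl fun _ _ => by ring
    _ ≤ ε := (mul_le_of_le_one_right' hmoment).trans
        (mul_le_of_le_one_left' (ENNReal.ofReal_le_one.2 hκ.2.le))

theorem stmt17_general (N : ℕ) (κ : ℝ) (hκ : κ ∈ Set.Ioo (0 : ℝ) 1) :
    (∀ f : (Fin N → Bool) → ℝ≥0∞, (∀ ω, f ω ≤ 1) →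
      (∀ p : ℝ≥0∞, p ≤ 1 → ∀ ε : ℝ≥0∞, 0 < ε → bern N p {ω | f ω ≤ ε} ≤ ε) →
      ∃ g : (Fin N → Bool) → ℝ≥0∞, ∃ h : ℕ → ℝ≥0∞,
        (∀ ω, g ω ≤ 1) ∧
        (∀ (P : Measure (Fin N → Bool)) [IsProbabilityMeasure P],
          (∀ π : Equiv.Perm (Fin N), P.map (fun ω i => ω (π i)) = P) →
          ∀ ε : ℝ≥0∞, 0 < ε → P {ω | g ω ≤ ε} ≤ ε) ∧
        (∀ k, h k ≤ 1) ∧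
        (∀ p : ℝ≥0∞, p ≤ 1 → ∀ ε : ℝ≥0∞, 0 < ε →
          binMeasure N p {k | h k ≤ ε} ≤ ε) ∧
        (∀ p : ℝ≥0∞, p ≤ 1 → ∀ᵐ ω ∂(bern N p),
          g ω * h (cnt ω) ≤ (ENNReal.ofReal κ)⁻¹ * f ω ^ (1 - κ))) ∧
    (∀ g : (Fin N → Bool) → ℝ≥0∞, ∀ h : ℕ → ℝ≥0∞,
      (∀ ω, g ω ≤ 1) →
      (∀ (P : Measure (Fin N → Bool)) [IsProbabilityMeasure P],
        (∀ π : Equiv.Perm (Fin N), P.map (fun ω i => ω (π i)) = P) →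
        ∀ ε : ℝ≥0∞, 0 < ε → P {ω | g ω ≤ ε} ≤ ε) →
      (∀ k, h k ≤ 1) →
      (∀ p : ℝ≥0∞, p ≤ 1 → ∀ ε : ℝ≥0∞, 0 < ε →
        binMeasure N p {k | h k ≤ ε} ≤ ε) →
      ∀ p : ℝ≥0∞, p ≤ 1 → ∀ ε : ℝ≥0∞, 0 < ε →
        bern N p
          {ω | min 1 (((ENNReal.ofReal κ) ^ 2)⁻¹ * (g ω * h (cnt ω)) ^ (1 - κ)) ≤ ε}
          ≤ ε) := by
  refine ⟨fun f _ hf => ⟨levelRank f, levelBound κ f, levelRank_le_one f,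
    fun P _ hP => Exchangeable.isPFunction_levelRank hP f, fun _ => min_le_left _ _,
    fun p hp => isPFunction_binMeasure_levelBound hκ hp (hf p hp),
    fun _ _ => ae_of_all _ (levelRank_mul_levelBound_le κ f)⟩, ?_⟩
  intro g h _ hg _ hh p hp
  exact isPFunction_bern_min hκ hp hg (hh p hp)

/-- let `Ω = {0,1}^N` and `κ ∈ (0,1)`.
(a) For every Bernoulli p-function `f` there are an exchangeable p-function `g`
and a binomial p-function `h` such that for every `p ∈ [0,1]`,
`g(ω)·h(+ω) ≤ κ⁻¹·f(ω)^{1-κ}` for `B_p`-almost every `ω`.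
(b) For every exchangeable p-function `g` and binomial p-function `h`,
`ω ↦ min 1 (κ⁻²·(g(ω)·h(+ω))^{1-κ})` is a Bernoulli p-function. -/
theorem stmt17 (N : ℕ) (hN : 1 ≤ N) (κ : ℝ) (hκ : κ ∈ Set.Ioo (0 : ℝ) 1) :
    (∀ f : (Fin N → Bool) → ℝ≥0∞, (∀ ω, f ω ≤ 1) →
      (∀ p : ℝ≥0∞, p ≤ 1 → ∀ ε : ℝ≥0∞, 0 < ε → bern N p {ω | f ω ≤ ε} ≤ ε) →
      ∃ g : (Fin N → Bool) → ℝ≥0∞, ∃ h : ℕ → ℝ≥0∞,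
        (∀ ω, g ω ≤ 1) ∧
        (∀ (P : Measure (Fin N → Bool)) [IsProbabilityMeasure P],
          (∀ π : Equiv.Perm (Fin N), P.map (fun ω i => ω (π i)) = P) →
          ∀ ε : ℝ≥0∞, 0 < ε → P {ω | g ω ≤ ε} ≤ ε) ∧
        (∀ k, h k ≤ 1) ∧
        (∀ p : ℝ≥0∞, p ≤ 1 → ∀ ε : ℝ≥0∞, 0 < ε →
          binMeasure N p {k | h k ≤ ε} ≤ ε) ∧
        (∀ p : ℝ≥0∞, p ≤ 1 → ∀ᵐ ω ∂(bern N p),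
          g ω * h (cnt ω) ≤ (ENNReal.ofReal κ)⁻¹ * f ω ^ (1 - κ))) ∧
    (∀ g : (Fin N → Bool) → ℝ≥0∞, ∀ h : ℕ → ℝ≥0∞,
      (∀ ω, g ω ≤ 1) →
      (∀ (P : Measure (Fin N → Bool)) [IsProbabilityMeasure P],
        (∀ π : Equiv.Perm (Fin N), P.map (fun ω i => ω (π i)) = P) →
        ∀ ε : ℝ≥0∞, 0 < ε → P {ω | g ω ≤ ε} ≤ ε) →
      (∀ k, h k ≤ 1) →
      (∀ p : ℝ≥0∞, p ≤ 1 → ∀ ε : ℝ≥0∞, 0 < ε →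
        binMeasure N p {k | h k ≤ ε} ≤ ε) →
      ∀ p : ℝ≥0∞, p ≤ 1 → ∀ ε : ℝ≥0∞, 0 < ε →
        bern N p
          {ω | min 1 (((ENNReal.ofReal κ) ^ 2)⁻¹ * (g ω * h (cnt ω)) ^ (1 - κ)) ≤ ε}
          ≤ ε) :=
  stmt17_general N κ hκ
end
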